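/- Let k ≥ 2 be an integer, p a prime, and α ≥ 1 an integer. For all complex s with Re(s) > 0, G_k(s, p^α) = (1 - 1/p)^{-1} (1 - p^{-s})^k ∑_{j=0}^∞ p^{-js} ( d_{k-1}(p^{α+j}) + (1 - p^{s-1}) d_k(p^{α+j-1}) ), the series converging absolutely. -/

import Mathlib

/-- The `k`-th divisor function `d_k`, the `k`-fold Dirichlet convolution of the
constant function `1`. -/
noncomputable def dk (k : ℕ) : ArithmeticFunction ℕ := ArithmeticFunction.zeta ^ k

/-- The local factor `g_k(s, q) = ∏_{p | q} (1 - p^{-s})^k ∑_{j≥0} d_k(p^{j+α_p}) p^{-js}`,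
where `q = ∏_p p^{α_p}`. -/
noncomputable def gk (k : ℕ) (s : ℂ) (q : ℕ) : ℂ :=
  ∏ p ∈ q.primeFactors,
    ((1 - (p : ℂ) ^ (-s)) ^ k *
      ∑' j : ℕ, (dk k (p ^ (j + q.factorization p)) : ℂ) * (p : ℂ) ^ (-(j : ℂ) * s))

/-- `G_k(s, q) = ∑_{d | q} (μ(d)/φ(d)) d^s ∑_{e | d} μ(e) e^{-s} g_k(s, qe/d)`. -/
noncomputable def Gk (k : ℕ) (s : ℂ) (q : ℕ) : ℂ :=
  ∑ d ∈ q.divisors,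
    ((ArithmeticFunction.moebius d : ℂ) / (d.totient : ℂ)) * (d : ℂ) ^ s *
      ∑ e ∈ d.divisors, (ArithmeticFunction.moebius e : ℂ) * (e : ℂ) ^ (-s) * gk k s (q * e / d)

/-!
At a prime power only `d = 1` and `d = p` survive the Möbius function, so
`G_k(s, p^α) = (1 - 1/p)⁻¹ (g_k(s, p^α) - p^{s-1} g_k(s, p^{α-1}))`. Since
`d_{k+1}(p^n) = C(n + k, k)`, each local factor is `(1 - p^{-s})^k` times a tail of the
binomial series of `(1 - p^{-s})^{-k}`, which converges absolutely for `Re s > 0`; the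
case `α = 1` uses its sum, `g_k(s, 1) = 1`. Pascal's rule
`d_k(p^{m+1}) = d_{k-1}(p^{m+1}) + d_k(p^m)` then rewrites the difference of the two tails as
the series of the statement.
-/

open ArithmeticFunction Asymptotics Filter Finset

lemma dk_succ_apply_prime_pow {p : ℕ} (hp : p.Prime) (k n : ℕ) :
    dk (k + 1) (p ^ n) = ∑ i ∈ range (n + 1), dk k (p ^ i) := by
  rw [dk, pow_succ, mul_zeta_apply, Nat.sum_divisors_prime_pow hp]
  rfl

lemma dk_succ_prime_pow_succ {p : ℕ} (hp : p.Prime) (k n : ℕ) :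
    dk (k + 1) (p ^ (n + 1)) = dk k (p ^ (n + 1)) + dk (k + 1) (p ^ n) := by
  rw [dk_succ_apply_prime_pow hp, sum_range_succ, dk_succ_apply_prime_pow hp, add_comm]

lemma dk_succ_prime_pow_eq_choose {p : ℕ} (hp : p.Prime) (k n : ℕ) :
    dk (k + 1) (p ^ n) = (n + k).choose k := by
  induction k generalizing n with
  | zero => simp [dk, hp.ne_zero]
  | succ k ih =>
    rw [dk_succ_apply_prime_pow hp]
    simp_rw [ih]
    rw [Nat.sum_range_add_choose, add_assoc]

lemma isBigO_choose_add (k β : ℕ) :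
    (fun n : ℕ => ((n + β).choose k : ℝ)) =O[atTop] fun n => ((n ^ k : ℕ) : ℝ) := by
  refine isBigO_iff.2 ⟨2 ^ k, ?_⟩
  filter_upwards [eventually_ge_atTop β] with n hn
  simp only [Real.norm_natCast]
  norm_cast
  calc (n + β).choose k
    _ ≤ (2 * n).choose k := Nat.choose_le_choose k (by omega)
    _ ≤ (2 * n) ^ k := Nat.choose_le_pow _ _
    _ = 2 ^ k * n ^ k := Nat.mul_pow 2 n k

lemma summable_norm_dk_prime_pow_add_mul_geometric {R : Type*} [NormedRing R] {p : ℕ}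
    (hp : p.Prime) {x : R} (hx : ‖x‖ < 1) (k β : ℕ) :
    Summable fun j : ℕ => ‖(dk (k + 1) (p ^ (j + β)) : R) * x ^ j‖ := by
  simp_rw [dk_succ_prime_pow_eq_choose hp, add_assoc]
  exact summable_norm_mul_geometric_of_norm_lt_one hx (isBigO_choose_add k (β + k))

lemma tsum_dk_prime_pow_mul_geometric {𝕜 : Type*} [NormedField 𝕜] [CompleteSpace 𝕜] {p : ℕ}
    (hp : p.Prime) {x : 𝕜} (hx : ‖x‖ < 1) (k : ℕ) :
    ∑' j : ℕ, (dk (k + 1) (p ^ j) : 𝕜) * x ^ j = 1 / (1 - x) ^ (k + 1) := by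
  simp_rw [dk_succ_prime_pow_eq_choose hp]
  exact tsum_choose_mul_geometric_of_norm_lt_one k hx

lemma norm_natCast_cpow_neg_lt_one {p : ℕ} (hp : 1 < p) {s : ℂ} (hs : 0 < s.re) :
    ‖(p : ℂ) ^ (-s)‖ < 1 := by
  rw [Complex.norm_natCast_cpow_of_pos (by omega), Complex.neg_re]
  exact Real.rpow_lt_one_of_one_lt_of_neg (mod_cast hp) (neg_neg_of_pos hs)

lemma cpow_neg_natCast_mul (z s : ℂ) (j : ℕ) : z ^ (-(j : ℂ) * s) = (z ^ (-s)) ^ j := by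
  rw [neg_mul, ← mul_neg, Complex.cpow_nat_mul]

lemma gk_succ_prime_pow {p : ℕ} (hp : p.Prime) {s : ℂ} (hs : 0 < s.re) (k β : ℕ) :
    gk (k + 1) s (p ^ β) =
      (1 - (p : ℂ) ^ (-s)) ^ (k + 1) *
        ∑' j : ℕ, (dk (k + 1) (p ^ (j + β)) : ℂ) * ((p : ℂ) ^ (-s)) ^ j := by
  have hx := norm_natCast_cpow_neg_lt_one hp.one_lt hs
  rcases eq_or_ne β 0 with rfl | hβ
  · have h1x : (1 - (p : ℂ) ^ (-s)) ^ (k + 1) ≠ 0 :=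
      pow_ne_zero _ (sub_ne_zero.2 fun h => by simp [← h] at hx)
    simp only [gk, pow_zero, Nat.primeFactors_one, prod_empty, add_zero]
    rw [tsum_dk_prime_pow_mul_geometric hp hx, mul_one_div_cancel h1x]
  · simp only [gk, Nat.primeFactors_prime_pow hβ hp, prod_singleton, hp.factorization_pow,
      Finsupp.single_eq_same, cpow_neg_natCast_mul]

lemma Gk_prime_pow_succ {p : ℕ} (hp : p.Prime) (k a : ℕ) (s : ℂ) :
    Gk k s (p ^ (a + 1)) =
      (1 - 1 / (p : ℂ))⁻¹ * (gk k s (p ^ (a + 1)) - (p : ℂ) ^ (s - 1) * gk k s (p ^ a)) := by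
  rw [Gk, Nat.sum_divisors_prime_pow hp, sum_eq_add_of_mem 0 1 (by simp) (by simp) zero_ne_one
    fun c _ hc => by simp [moebius_apply_prime_pow hp hc.1, hc.2]]
  have hp0 : (p : ℂ) ≠ 0 := Nat.cast_ne_zero.2 hp.ne_zero
  have hp1 : (p : ℂ) - 1 ≠ 0 := sub_ne_zero.2 (Nat.cast_ne_one.2 hp.ne_one)
  have hdiv : p ^ (a + 1) / p = p ^ a := by rw [pow_succ, Nat.mul_div_cancel _ hp.pos]
  simp only [pow_zero, pow_one, Nat.divisors_one, sum_singleton, hp.divisors,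
    sum_pair hp.one_lt.ne, moebius_apply_one, moebius_apply_prime hp, mul_one, Nat.div_one,
    hdiv, Nat.mul_div_cancel _ hp.pos, Nat.totient_one, Nat.totient_prime hp,
    Complex.cpow_sub _ _ hp0, Complex.cpow_neg, Complex.cpow_one, Nat.cast_one, Complex.one_cpow]
  have hps : (p : ℂ) ^ s ≠ 0 := by simp [Complex.cpow_eq_zero_iff, hp0]
  rw [Nat.cast_sub hp.one_le]
  push_cast
  field_simp
  ring

/-- For `k ≥ 2`, a prime `p`, `α ≥ 1`, and `Re(s) > 0`:
`G_k(s, p^α) = (1 - 1/p)⁻¹ (1 - p^{-s})^k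
  ∑_{j≥0} p^{-js} ( d_{k-1}(p^{α+j}) + (1 - p^{s-1}) d_k(p^{α+j-1}) )`,
the series converging absolutely. -/
theorem Gk_prime_pow_eq (k : ℕ) (hk : 2 ≤ k) (p : ℕ) (hp : p.Prime) (α : ℕ) (hα : 1 ≤ α)
    (s : ℂ) (hs : 0 < s.re) :
    Summable (fun j : ℕ => ‖(p : ℂ) ^ (-(j : ℂ) * s) *
      ((dk (k - 1) (p ^ (α + j)) : ℂ) + (1 - (p : ℂ) ^ (s - 1)) * (dk k (p ^ (α + j - 1)) : ℂ))‖) ∧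
    Gk k s (p ^ α) =
      (1 - 1 / (p : ℂ))⁻¹ * (1 - (p : ℂ) ^ (-s)) ^ k *
        ∑' j : ℕ, (p : ℂ) ^ (-(j : ℂ) * s) *
          ((dk (k - 1) (p ^ (α + j)) : ℂ) +
            (1 - (p : ℂ) ^ (s - 1)) * (dk k (p ^ (α + j - 1)) : ℂ)) := by
  obtain ⟨k, rfl⟩ : ∃ m, k = m + 1 := ⟨k - 1, by omega⟩
  obtain ⟨a, rfl⟩ : ∃ a, α = a + 1 := ⟨α - 1, by omega⟩
  set x := (p : ℂ) ^ (-s)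
  have hx : ‖x‖ < 1 := norm_natCast_cpow_neg_lt_one hp.one_lt hs
  have hF := summable_norm_dk_prime_pow_add_mul_geometric hp hx k (a + 1)
  have hG := summable_norm_dk_prime_pow_add_mul_geometric hp hx k a
  have hterm : ∀ j : ℕ, (p : ℂ) ^ (-(j : ℂ) * s) *
      ((dk (k + 1 - 1) (p ^ (a + 1 + j)) : ℂ) +
        (1 - (p : ℂ) ^ (s - 1)) * (dk (k + 1) (p ^ (a + 1 + j - 1)) : ℂ)) =
      (dk (k + 1) (p ^ (j + (a + 1))) : ℂ) * x ^ j -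
        (p : ℂ) ^ (s - 1) * ((dk (k + 1) (p ^ (j + a)) : ℂ) * x ^ j) := fun j => by
    rw [cpow_neg_natCast_mul, Nat.add_sub_cancel, show a + 1 + j - 1 = j + a by omega,
      show a + 1 + j = j + a + 1 by omega, ← add_assoc, dk_succ_prime_pow_succ hp, Nat.cast_add]
    ring
  refine ⟨?_, ?_⟩
  · simp_rw [hterm]
    refine (hF.add (hG.mul_left ‖(p : ℂ) ^ (s - 1)‖)).of_nonneg_of_le (fun _ => norm_nonneg _)
      fun j => (norm_sub_le _ _).trans_eq (congrArg (_ + ·) (norm_mul _ _))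
  · rw [tsum_congr hterm, hF.of_norm.tsum_sub (hG.of_norm.mul_left _), tsum_mul_left,
      Gk_prime_pow_succ hp, gk_succ_prime_pow hp hs, gk_succ_prime_pow hp hs]
    ring
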